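/- arXiv:2208.13706 — 8 statements merged into one kernel-verified Lean document; each statement's English description precedes it below -/
import Mathlib

section
/- Let 𝕀 = diag(I₁, I₂, I₃) with I₁, I₂, I₃ nonzero, let ξ₁, ξ₂, ξ₃ ∈ ℝ³, let s be a 3 × 3 real antisymmetric matrix, and let ϑ ∈ ℝ. Define Ω̃(Π) := 𝕀⁻¹Π − (1/2) Σ_{i,j} s^{ij} (ξ_i × ξ_j). If Π : ℝ → ℝ³ is differentiable and satisfies the deterministic Lévy-area-corrected dissipative rigid body equation Π'(t) = Π(t) × Ω̃(Π(t)) + ϑ Π(t) × (Π(t) × Ω̃(Π(t))) for all t, then the Euclidean norm ‖Π(t)‖ is constant in t (equal to ‖Π(0)‖). -/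
/-!
Both terms of the vector field are cross products with `Π` on the left, hence orthogonal to `Π`.
So `d/dt ‖Π‖² = 2 ⟪Π, Π'⟫ = 0`, and `‖Π‖²` is constant by the mean value theorem.
-/

open Matrix

theorem HasDerivAt.sum_sq {ι : Type*} [Fintype ι] {f : ℝ → ι → ℝ} {f' : ι → ℝ} {t : ℝ}
    (hf : HasDerivAt f f' t) :
    HasDerivAt (fun t => ∑ i, f t i ^ 2) (2 * (f t ⬝ᵥ f')) t := by
  rw [dotProduct, Finset.mul_sum]
  refine HasDerivAt.fun_sum fun i _ => ?_
  exact ((hasDerivAt_pi.mp hf i).fun_pow 2).congr_deriv (by push_cast; ring)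

theorem dotProduct_cross_add_smul_cross_eq_zero {R : Type*} [CommRing R]
    (p u v : Fin 3 → R) (c : R) : p ⬝ᵥ (p ⨯₃ u + c • (p ⨯₃ v)) = 0 := by
  rw [dotProduct_add, dotProduct_smul, dot_self_cross, dot_self_cross, smul_zero, add_zero]

theorem rigid_body_levy_dissipative_norm_const_general
    (ϑ : ℝ)
    (Ω : (Fin 3 → ℝ) → Fin 3 → ℝ)
    (P : ℝ → Fin 3 → ℝ)
    (hP : ∀ t, HasDerivAt P
      (P t ⨯₃ Ω (P t) + ϑ • (P t ⨯₃ (P t ⨯₃ Ω (P t)))) t) (t : ℝ) :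
    Real.sqrt (∑ i, P t i ^ 2) = Real.sqrt (∑ i, P 0 i ^ 2) := by
  have hderiv : ∀ u, HasDerivAt (fun t => ∑ i, P t i ^ 2) 0 u := fun u => by
    simpa only [dotProduct_cross_add_smul_cross_eq_zero, mul_zero] using (hP u).sum_sq
  have hconst := is_const_of_deriv_eq_zero (fun u => (hderiv u).differentiableAt)
    (fun u => (hderiv u).deriv) t 0
  exact congrArg Real.sqrt hconst

/-- Let `𝕀 = diag(I₁, I₂, I₃)` with nonzero entries `Iv i`, let
`ξ₁, ξ₂, ξ₃ ∈ ℝ³`, `s` a `3 × 3` real antisymmetric matrix, `ϑ ∈ ℝ`, and set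
`Ω̃(Π) = 𝕀⁻¹Π − (1/2) Σ_{i,j} s^{ij} (ξᵢ × ξⱼ)`.  Any differentiable solution of the
Lévy-area-corrected dissipative rigid body equation
`Π' = Π × Ω̃(Π) + ϑ Π × (Π × Ω̃(Π))` has constant Euclidean norm. -/
theorem rigid_body_levy_dissipative_norm_const
    (Iv : Fin 3 → ℝ) (hIv : ∀ i, Iv i ≠ 0)
    (ξ : Fin 3 → Fin 3 → ℝ) (s : Matrix (Fin 3) (Fin 3) ℝ) (hs : sᵀ = -s) (ϑ : ℝ)
    (Ω : (Fin 3 → ℝ) → Fin 3 → ℝ)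
    (hΩ : ∀ p, Ω p = (fun i => p i / Iv i) - ((1 : ℝ)/2) • ∑ i, ∑ j, s i j • (ξ i ⨯₃ ξ j))
    (P : ℝ → Fin 3 → ℝ)
    (hP : ∀ t, HasDerivAt P
      (P t ⨯₃ Ω (P t) + ϑ • (P t ⨯₃ (P t ⨯₃ Ω (P t)))) t) (t : ℝ) :
    Real.sqrt (∑ i, P t i ^ 2) = Real.sqrt (∑ i, P 0 i ^ 2) :=
  rigid_body_levy_dissipative_norm_const_general ϑ Ω P hP t
end

section
/- Let h̃ : ℝ³ → ℝ be continuously differentiable, ϑ ∈ ℝ, and let Π : ℝ → ℝ³ be differentiable with Π'(t) = Π(t) × ∇h̃(Π(t)) + ϑ Π(t) × (Π(t) × ∇h̃(Π(t))) for all t. Then the energy h̃(Π(t)) is differentiable in t with derivative (d/dt) h̃(Π(t)) = −ϑ ‖Π(t) × ∇h̃(Π(t))‖². In particular, for ϑ > 0 the energy is nonincreasing along solutions. -/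
open Matrix

/-- The (Euclidean) gradient of a function on `ℝ³ = Fin 3 → ℝ`. -/
noncomputable def grad (f : (Fin 3 → ℝ) → ℝ) (x : Fin 3 → ℝ) : Fin 3 → ℝ :=
  fun i => fderiv ℝ f x (Pi.single i 1)

theorem fderiv_apply_eq_dotProduct_grad (f : (Fin 3 → ℝ) → ℝ) (x v : Fin 3 → ℝ) :
    fderiv ℝ f x v = v ⬝ᵥ grad f x := by
  conv_lhs => rw [← Finset.univ_sum_single v]
  simp only [map_sum, dotProduct, grad]
  refine Finset.sum_congr rfl fun i _ => ?_
  rw [← smul_eq_mul, ← map_smul, ← Pi.single_smul, smul_eq_mul, mul_one]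

theorem cross_cross_self_dotProduct (a g : Fin 3 → ℝ) :
    a ⨯₃ (a ⨯₃ g) ⬝ᵥ g = -(a ⨯₃ g ⬝ᵥ a ⨯₃ g) := by
  rw [dotProduct_comm, triple_product_permutation, triple_product_permutation,
    ← cross_anticomm a g, dotProduct_neg]

/-- Along any differentiable solution of
`Π' = Π × ∇h̃(Π) + ϑ Π × (Π × ∇h̃(Π))` (with `h̃ : ℝ³ → ℝ` continuously differentiable),
the energy `h̃(Π(t))` is differentiable in `t` with derivative
`−ϑ ‖Π(t) × ∇h̃(Π(t))‖²`. -/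
theorem double_bracket_energy_dissipation
    (h : (Fin 3 → ℝ) → ℝ) (hh : ContDiff ℝ 1 h) (ϑ : ℝ)
    (P : ℝ → Fin 3 → ℝ)
    (hP : ∀ t, HasDerivAt P
      (P t ⨯₃ grad h (P t) + ϑ • (P t ⨯₃ (P t ⨯₃ grad h (P t)))) t) (t : ℝ) :
    HasDerivAt (fun τ => h (P τ)) (-ϑ * ∑ i, ((P t ⨯₃ grad h (P t)) i) ^ 2) t := by
  have hchain := ((hh.differentiable one_ne_zero) (P t)).hasFDerivAt.comp_hasDerivAt t (hP t)
  refine hchain.congr_deriv ?_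
  rw [fderiv_apply_eq_dotProduct_grad]
  generalize P t = a
  generalize grad h a = g
  -- The Hamiltonian part `Π × ∇h̃` is orthogonal to `∇h̃` and so conserves energy.
  rw [add_dotProduct, dotProduct_comm, dot_cross_self, smul_dotProduct,
    cross_cross_self_dotProduct]
  simp only [dotProduct, smul_eq_mul, sq]
  ring
end

section
/- Let 𝕀 = diag(I₁, I₂, I₃) with I₁, I₂, I₃ nonzero and let a ∈ ℝ³ be a constant vector. If Π : ℝ → ℝ³ is differentiable and satisfies the Lévy-area-corrected deterministic rigid body equation Π'(t) = (𝕀⁻¹Π(t) + a) × Π(t), then both the Casimir ‖Π(t)‖ and the modified Hamiltonian h̃(Π(t)) := (1/2) Π(t) · 𝕀⁻¹Π(t) + a · Π(t) are constant in t. -/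
/-!
Both quantities are conserved for the same reason: along `Π' = ω × Π` the derivative of a function
whose gradient is `ω` (or `Π`) is `ω · (ω × Π) = 0` (or `Π · (ω × Π) = 0`). The gradient of the
Casimir `‖Π‖²/2` is `Π`, and that of `h̃` is `𝕀⁻¹Π + a`, the corrected angular velocity.
-/

open Matrix

theorem HasDerivAt.dotProduct {𝕜 ι : Type*} [NontriviallyNormedField 𝕜] [Fintype ι]
    {f g : 𝕜 → ι → 𝕜} {f' g' : ι → 𝕜} {x : 𝕜}
    (hf : HasDerivAt f f' x) (hg : HasDerivAt g g' x) :
    HasDerivAt (fun y => f y ⬝ᵥ g y) (f' ⬝ᵥ g x + f x ⬝ᵥ g') x := by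
  have hsum := HasDerivAt.fun_sum (u := Finset.univ) fun i _ =>
    (hasDerivAt_pi.mp hf i).fun_mul (hasDerivAt_pi.mp hg i)
  exact hsum.congr_deriv Finset.sum_add_distrib

noncomputable def rigidBodyAngularVelocity {ι : Type*} (Iv a x : ι → ℝ) : ι → ℝ :=
  (fun i => x i / Iv i) + a

noncomputable def rigidBodyHamiltonian {ι : Type*} [Fintype ι] (Iv a x : ι → ℝ) : ℝ :=
  1 / 2 * (x ⬝ᵥ fun i => x i / Iv i) + a ⬝ᵥ x

theorem hasDerivAt_rigidBodyHamiltonian {ι : Type*} [Fintype ι] (Iv a : ι → ℝ)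
    {Q : ℝ → ι → ℝ} {Q' : ι → ℝ} {t : ℝ}
    (hQ : HasDerivAt Q Q' t) :
    HasDerivAt (fun s => rigidBodyHamiltonian Iv a (Q s))
      (rigidBodyAngularVelocity Iv a (Q t) ⬝ᵥ Q') t := by
  have hdiv : HasDerivAt (fun s i => Q s i / Iv i) (fun i => Q' i / Iv i) t :=
    hasDerivAt_pi.mpr fun i => (hasDerivAt_pi.mp hQ i).div_const (Iv i)
  have hlin : HasDerivAt (fun s => a ⬝ᵥ Q s) (0 ⬝ᵥ Q t + a ⬝ᵥ Q') t :=
    (hasDerivAt_const t a).dotProduct hQ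
  refine (((hQ.dotProduct hdiv).const_mul (1 / 2 : ℝ)).fun_add hlin).congr_deriv ?_
  simp only [rigidBodyAngularVelocity, dotProduct, Pi.add_apply, Pi.zero_apply, zero_mul,
    Finset.sum_const_zero, zero_add, Finset.mul_sum, ← Finset.sum_add_distrib]
  exact Finset.sum_congr rfl fun i _ => by ring

section RigidBody

variable {P ω : ℝ → Fin 3 → ℝ}

theorem dotProduct_self_eq_of_hasDerivAt_cross (hP : ∀ t, HasDerivAt P (ω t ⨯₃ P t) t)
    (t : ℝ) : P t ⬝ᵥ P t = P 0 ⬝ᵥ P 0 := by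
  have hderiv : ∀ s, HasDerivAt (fun u => P u ⬝ᵥ P u) 0 s := fun s => by
    simpa only [dot_cross_self, dotProduct_comm _ (P s), add_zero] using
      (hP s).dotProduct (hP s)
  exact is_const_of_deriv_eq_zero (fun s => (hderiv s).differentiableAt)
    (fun s => (hderiv s).deriv) t 0

theorem rigidBodyHamiltonian_eq_of_hasDerivAt (Iv a : Fin 3 → ℝ)
    (hP : ∀ t, HasDerivAt P (rigidBodyAngularVelocity Iv a (P t) ⨯₃ P t) t) (t : ℝ) :
    rigidBodyHamiltonian Iv a (P t) = rigidBodyHamiltonian Iv a (P 0) := by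
  have hderiv : ∀ s, HasDerivAt (fun u => rigidBodyHamiltonian Iv a (P u)) 0 s := fun s => by
    simpa only [dot_self_cross] using hasDerivAt_rigidBodyHamiltonian Iv a (hP s)
  exact is_const_of_deriv_eq_zero (fun s => (hderiv s).differentiableAt)
    (fun s => (hderiv s).deriv) t 0

end RigidBody

theorem rigid_body_levy_conserved_general
    (Iv : Fin 3 → ℝ) (a : Fin 3 → ℝ)
    (P : ℝ → Fin 3 → ℝ)
    (hP : ∀ t, HasDerivAt P (((fun i => P t i / Iv i) + a) ⨯₃ P t) t) (t : ℝ) :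
    Real.sqrt (∑ i, P t i ^ 2) = Real.sqrt (∑ i, P 0 i ^ 2) ∧
      ((1 : ℝ)/2) * (P t ⬝ᵥ fun i => P t i / Iv i) + a ⬝ᵥ P t
        = ((1 : ℝ)/2) * (P 0 ⬝ᵥ fun i => P 0 i / Iv i) + a ⬝ᵥ P 0 := by
  have hsq : ∀ s, ∑ i, P s i ^ 2 = P s ⬝ᵥ P s := fun s => by
    simp only [dotProduct, sq]
  refine ⟨?_, rigidBodyHamiltonian_eq_of_hasDerivAt Iv a hP t⟩
  rw [hsq, hsq, dotProduct_self_eq_of_hasDerivAt_cross hP t]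

/-- Let `𝕀 = diag(I₁, I₂, I₃)` with nonzero entries `Iv i` and let `a ∈ ℝ³`
be constant. Along any differentiable solution of the Lévy-area-corrected deterministic rigid
body equation `Π' = (𝕀⁻¹Π + a) × Π`, both the Casimir `‖Π‖` (Euclidean norm) and the modified
Hamiltonian `h̃(Π) = (1/2) Π · 𝕀⁻¹Π + a · Π` are constant in time. -/
theorem rigid_body_levy_conserved
    (Iv : Fin 3 → ℝ) (hIv : ∀ i, Iv i ≠ 0) (a : Fin 3 → ℝ)
    (P : ℝ → Fin 3 → ℝ)
    (hP : ∀ t, HasDerivAt P (((fun i => P t i / Iv i) + a) ⨯₃ P t) t) (t : ℝ) :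
    Real.sqrt (∑ i, P t i ^ 2) = Real.sqrt (∑ i, P 0 i ^ 2) ∧
      ((1 : ℝ)/2) * (P t ⬝ᵥ fun i => P t i / Iv i) + a ⬝ᵥ P t
        = ((1 : ℝ)/2) * (P 0 ⬝ᵥ fun i => P 0 i / Iv i) + a ⬝ᵥ P 0 :=
  rigid_body_levy_conserved_general Iv a P hP t
end

section
/- Let p : ℝ³ → ℝ be twice continuously differentiable. Then for every Π ∈ ℝ³, Σ_{i=1}^{3} (Π × e_i) · ∇((Π × e_i) · ∇p)(Π) = −div(Π ↦ Π × (Π × ∇p(Π)))(Π), where e₁, e₂, e₃ is the standard basis of ℝ³. -/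
open Matrix

/-- The divergence of a vector field on `ℝ³ = Fin 3 → ℝ`. -/
noncomputable def div3 (F : (Fin 3 → ℝ) → Fin 3 → ℝ) (x : Fin 3 → ℝ) : ℝ :=
  ∑ i, fderiv ℝ F x (Pi.single i 1) i

/-!
Both sides only involve `g = ∇p` and its derivative `H` at `Π`; the identity holds for any vector
field `g` differentiable at `Π`, symmetric Jacobian or not. By the product rule the
left side is `Σᵢ ((Π × eᵢ) × eᵢ) · g + Σᵢ (Π × eᵢ) · H (Π × eᵢ) = -2 Π · g + |Π|² tr H - Π · H Π`,
since `Σᵢ (Π × eᵢ) × eᵢ = -2 Π` and `Σᵢ (Π × eᵢ)(Π × eᵢ)ᵀ = |Π|² I - Π Πᵀ`. The product rule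
applied twice to `x × (x × g x)` gives the same expression for minus the divergence.
-/

section Bilinear

variable {𝕜 E F G H : Type*} [NontriviallyNormedField 𝕜] [CompleteSpace 𝕜]
  [NormedAddCommGroup E] [NormedSpace 𝕜 E] [NormedAddCommGroup F] [NormedSpace 𝕜 F]
  [FiniteDimensional 𝕜 F] [NormedAddCommGroup G] [NormedSpace 𝕜 G] [FiniteDimensional 𝕜 G]
  [NormedAddCommGroup H] [NormedSpace 𝕜 H]
  (B : F →ₗ[𝕜] G →ₗ[𝕜] H) {f : E → F} {g : E → G} {x : E}

theorem LinearMap.differentiableAt_apply₂ (hf : DifferentiableAt 𝕜 f x)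
    (hg : DifferentiableAt 𝕜 g x) : DifferentiableAt 𝕜 (fun y => B (f y) (g y)) x :=
  (B.toContinuousBilinearMap.hasFDerivAt_of_bilinear hf.hasFDerivAt hg.hasFDerivAt).differentiableAt

theorem LinearMap.fderiv_apply₂_apply (hf : DifferentiableAt 𝕜 f x)
    (hg : DifferentiableAt 𝕜 g x) (v : E) :
    fderiv 𝕜 (fun y => B (f y) (g y)) x v
      = B (fderiv 𝕜 f x v) (g x) + B (f x) (fderiv 𝕜 g x v) := by
  have h : fderiv 𝕜 (fun y => B (f y) (g y)) x = _ :=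
    B.toContinuousBilinearMap.fderiv_of_bilinear hf hg
  simp [h, add_comm]

end Bilinear

section CrossAlgebra

variable (P w : Fin 3 → ℝ) (M : Matrix (Fin 3) (Fin 3) ℝ)

theorem sum_cross_single_cross_single :
    ∑ i, P ⨯₃ Pi.single i 1 ⨯₃ Pi.single i 1 = -(2 : ℝ) • P := by
  ext j
  fin_cases j <;>
    simp only [cross_apply, Finset.sum_apply, Fin.sum_univ_three, Pi.single_apply, cons_val,
      Fin.reduceEq, ↓reduceIte, Fin.isValue, Pi.smul_apply, smul_eq_mul, Fin.zero_eta, Fin.mk_one,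
      Fin.reduceFinMk] <;> ring

theorem sum_cross_single_dotProduct_mulVec_cross_single :
    ∑ i, (P ⨯₃ Pi.single i 1) ⬝ᵥ M *ᵥ (P ⨯₃ Pi.single i 1)
      = (P ⬝ᵥ P) * M.trace - P ⬝ᵥ M *ᵥ P := by
  simp only [cross_apply, dotProduct, mulVec, trace, diag_apply, Fin.sum_univ_three,
    Pi.single_apply, cons_val, Fin.reduceEq, ↓reduceIte, Fin.isValue]
  ring

theorem sum_single_cross_apply : ∑ i, (Pi.single i 1 ⨯₃ w) i = 0 := by
  simp [cross_apply, Fin.sum_univ_three]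

theorem sum_cross_single_cross_apply :
    ∑ i, (P ⨯₃ (Pi.single i 1 ⨯₃ w)) i = 2 * (P ⬝ᵥ w) := by
  simp only [cross_apply, dotProduct, Fin.sum_univ_three, Pi.single_apply, cons_val,
    Fin.reduceEq, ↓reduceIte, Fin.isValue]
  ring

theorem sum_cross_cross_mulVec_single_apply :
    ∑ i, (P ⨯₃ (P ⨯₃ (M *ᵥ Pi.single i 1))) i = P ⬝ᵥ M *ᵥ P - (P ⬝ᵥ P) * M.trace := by
  simp only [cross_apply, dotProduct, mulVec, trace, diag_apply, Fin.sum_univ_three,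
    Pi.single_apply, cons_val, Fin.reduceEq, ↓reduceIte, Fin.isValue]
  ring

end CrossAlgebra

theorem ContDiff.differentiable_grad {p : (Fin 3 → ℝ) → ℝ} {n : WithTop ℕ∞}
    (hp : ContDiff ℝ n p) (hn : 2 ≤ n) : Differentiable ℝ (grad p) := fun x =>
  differentiableAt_pi.2 fun _ =>
    ((hp.fderiv_right (m := 1) hn).differentiable one_ne_zero x).clm_apply
      (differentiableAt_const _)

theorem dotProduct_grad (f : (Fin 3 → ℝ) → ℝ) (x v : Fin 3 → ℝ) :
    v ⬝ᵥ grad f x = fderiv ℝ f x v := by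
  conv_rhs => rw [← Finset.univ_sum_single v]
  simp only [grad, dotProduct, map_sum]
  congr! 1 with i
  rw [← smul_eq_mul, ← map_smul, ← Pi.single_smul, smul_eq_mul, mul_one]

section VectorField

variable {g : (Fin 3 → ℝ) → Fin 3 → ℝ} {P : Fin 3 → ℝ}

theorem fderiv_cross_dotProduct_apply (hg : DifferentiableAt ℝ g P) (e v : Fin 3 → ℝ) :
    fderiv ℝ (fun x => (x ⨯₃ e) ⬝ᵥ g x) P v = (v ⨯₃ e) ⬝ᵥ g P + (P ⨯₃ e) ⬝ᵥ fderiv ℝ g P v := by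
  have hcross : DifferentiableAt ℝ (fun x : Fin 3 → ℝ => x ⨯₃ e) P :=
    crossProduct.differentiableAt_apply₂ differentiableAt_fun_id (differentiableAt_const e)
  have h := (dotProductBilin ℝ ℝ).fderiv_apply₂_apply hcross hg v
  rw [crossProduct.fderiv_apply₂_apply (f := fun y => y) differentiableAt_fun_id
    (differentiableAt_const e)] at h
  simpa using h

theorem fderiv_cross_cross_apply (hg : DifferentiableAt ℝ g P) (v : Fin 3 → ℝ) :
    fderiv ℝ (fun x => x ⨯₃ (x ⨯₃ g x)) P v
      = v ⨯₃ (P ⨯₃ g P) + P ⨯₃ (v ⨯₃ g P + P ⨯₃ fderiv ℝ g P v) := by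
  rw [crossProduct.fderiv_apply₂_apply (f := fun y => y) differentiableAt_fun_id
      (crossProduct.differentiableAt_apply₂ differentiableAt_fun_id hg),
    crossProduct.fderiv_apply₂_apply (f := fun y => y) differentiableAt_fun_id hg]
  simp

theorem sum_cross_single_dotProduct_grad_eq_neg_div3 (hg : DifferentiableAt ℝ g P) :
    ∑ i, (P ⨯₃ Pi.single i 1) ⬝ᵥ grad (fun x => (x ⨯₃ Pi.single i 1) ⬝ᵥ g x) P
      = - div3 (fun x => x ⨯₃ (x ⨯₃ g x)) P := by
  set M := LinearMap.toMatrix' (fderiv ℝ g P : (Fin 3 → ℝ) →ₗ[ℝ] Fin 3 → ℝ)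
  have hM (v : Fin 3 → ℝ) : fderiv ℝ g P v = M *ᵥ v := (LinearMap.toMatrix'_mulVec _ v).symm
  have hlhs : ∑ i, (P ⨯₃ Pi.single i 1) ⬝ᵥ grad (fun x => (x ⨯₃ Pi.single i 1) ⬝ᵥ g x) P
      = -2 * (P ⬝ᵥ g P) + ((P ⬝ᵥ P) * M.trace - P ⬝ᵥ M *ᵥ P) := by
    simp only [dotProduct_grad, fderiv_cross_dotProduct_apply hg, hM, Finset.sum_add_distrib,
      ← sum_dotProduct, sum_cross_single_cross_single,
      sum_cross_single_dotProduct_mulVec_cross_single, smul_dotProduct, smul_eq_mul]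
  have hrhs : div3 (fun x => x ⨯₃ (x ⨯₃ g x)) P
      = 2 * (P ⬝ᵥ g P) + (P ⬝ᵥ M *ᵥ P - (P ⬝ᵥ P) * M.trace) := by
    simp only [div3, fderiv_cross_cross_apply hg, hM, map_add, Pi.add_apply,
      Finset.sum_add_distrib, sum_single_cross_apply, sum_cross_single_cross_apply,
      sum_cross_cross_mulVec_single_apply, zero_add]
  rw [hlhs, hrhs]
  ring

end VectorField

/-- For `p : ℝ³ → ℝ` twice continuously differentiable and every `Π ∈ ℝ³`,
`Σᵢ (Π × eᵢ) · ∇((· × eᵢ) · ∇p)(Π) = −div(x ↦ x × (x × ∇p(x)))(Π)`, i.e. the sum of second-order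
directional derivatives of `p` along the vector fields `x ↦ x × eᵢ` equals minus the divergence
of the double-bracket vector field. -/
theorem ito_stratonovich_correction_divergence_form
    (p : (Fin 3 → ℝ) → ℝ) (hp : ContDiff ℝ 2 p) (P : Fin 3 → ℝ) :
    ∑ i, (P ⨯₃ (Pi.single i 1 : Fin 3 → ℝ))
        ⬝ᵥ grad (fun x => (x ⨯₃ (Pi.single i 1 : Fin 3 → ℝ)) ⬝ᵥ grad p x) P
      = - div3 (fun x => x ⨯₃ (x ⨯₃ grad p x)) P :=
  sum_cross_single_dotProduct_grad_eq_neg_div3 (hp.differentiable_grad le_rfl P)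
end

section
/- Let h̃ : ℝ³ → ℝ be twice continuously differentiable, and let ϑ, σ > 0. Define the Gibbs density p(Π) := exp(−(2ϑ/σ²) h̃(Π)). Then for every Π ∈ ℝ³ the stationary Fokker–Planck equation of the dissipative stochastic rigid body holds: −(Π × ∇h̃(Π)) · ∇p(Π) − ϑ div(Π ↦ p(Π) (Π × (Π × ∇h̃(Π))))(Π) + (σ²/2) Σ_{i=1}^{3} (Π × e_i) · ∇((Π × e_i) · ∇p)(Π) = 0. -/
/-!
With `c = -2ϑ/σ²` and `p = exp (c h)` we have `∇p = c p ∇h`, so the Hamiltonian drift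
`(Π × ∇h) · ∇p` vanishes. The rotation generators `Lᵢ = (Π × eᵢ) · ∇` satisfy, for every
vector field `G`, `Σᵢ Lᵢ ((Π × eᵢ) · G) = -div (Π × (Π × G))`; applied to `G = ∇p` this turns the
noise term into `-(σ²c/2) div (p Π × (Π × ∇h)) = ϑ div (p Π × (Π × ∇h))`, which cancels the
dissipation term: the balance `σ²c/2 = -ϑ` is exactly the choice of the Gibbs exponent.
-/

open Matrix

section Bilinear

variable {𝕜 E ι : Type*} [NontriviallyNormedField 𝕜] [CompleteSpace 𝕜]
  [NormedAddCommGroup E] [NormedSpace 𝕜 E] {x : E}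

theorem DifferentiableAt.cross {f g : E → Fin 3 → 𝕜} (hf : DifferentiableAt 𝕜 f x)
    (hg : DifferentiableAt 𝕜 g x) : DifferentiableAt 𝕜 (fun y => f y ⨯₃ g y) x :=
  ((crossProduct : (Fin 3 → 𝕜) →ₗ[𝕜] _ →ₗ[𝕜] _).toContinuousBilinearMap.hasFDerivAt_of_bilinear
    hf.hasFDerivAt hg.hasFDerivAt).differentiableAt

theorem fderiv_cross_apply {f g : E → Fin 3 → 𝕜} (hf : DifferentiableAt 𝕜 f x)
    (hg : DifferentiableAt 𝕜 g x) (v : E) :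
    fderiv 𝕜 (fun y => f y ⨯₃ g y) x v = fderiv 𝕜 f x v ⨯₃ g x + f x ⨯₃ fderiv 𝕜 g x v := by
  let B := (crossProduct : (Fin 3 → 𝕜) →ₗ[𝕜] _ →ₗ[𝕜] _).toContinuousBilinearMap
  change fderiv 𝕜 (fun y => B (f y) (g y)) x v = _
  rw [B.fderiv_of_bilinear hf hg]
  simp [B, add_comm]

theorem fderiv_dotProduct_apply [Fintype ι] {f g : E → ι → 𝕜} (hf : DifferentiableAt 𝕜 f x)
    (hg : DifferentiableAt 𝕜 g x) (v : E) :
    fderiv 𝕜 (fun y => f y ⬝ᵥ g y) x v = fderiv 𝕜 f x v ⬝ᵥ g x + f x ⬝ᵥ fderiv 𝕜 g x v := by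
  let B := (dotProductBilin 𝕜 𝕜 : (ι → 𝕜) →ₗ[𝕜] _ →ₗ[𝕜] 𝕜).toContinuousBilinearMap
  change fderiv 𝕜 (fun y => B (f y) (g y)) x v = _
  rw [B.fderiv_of_bilinear hf hg]
  simp [B, add_comm]

end Bilinear

/-- The matrix `A` of `v ↦ x ⨯₃ v` satisfies `A Aᵀ = ‖x‖² I - x xᵀ`, so both sides equal
`‖x‖² tr DG - x ⬝ᵥ DG x - 2 x ⬝ᵥ G x`. -/
theorem sum_cross_single_dotProduct_grad (G : (Fin 3 → ℝ) → Fin 3 → ℝ) (x : Fin 3 → ℝ)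
    (hG : DifferentiableAt ℝ G x) :
    ∑ i, (x ⨯₃ Pi.single i 1) ⬝ᵥ grad (fun y => (y ⨯₃ Pi.single i 1) ⬝ᵥ G y) x
      = -div3 (fun y => y ⨯₃ (y ⨯₃ G y)) x := by
  have hid : DifferentiableAt ℝ (fun y : Fin 3 → ℝ => y) x := differentiableAt_fun_id
  have hrot (w v : Fin 3 → ℝ) :
      fderiv ℝ (fun y => (y ⨯₃ w) ⬝ᵥ G y) x v = (v ⨯₃ w) ⬝ᵥ G x + (x ⨯₃ w) ⬝ᵥ fderiv ℝ G x v := by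
    rw [fderiv_dotProduct_apply (hid.cross (differentiableAt_const w)) hG,
      fderiv_cross_apply hid (differentiableAt_const w)]
    simp
  have hcc (v : Fin 3 → ℝ) : fderiv ℝ (fun y => y ⨯₃ (y ⨯₃ G y)) x v
      = v ⨯₃ (x ⨯₃ G x) + x ⨯₃ (v ⨯₃ G x + x ⨯₃ fderiv ℝ G x v) := by
    rw [fderiv_cross_apply hid (hid.cross hG), fderiv_cross_apply hid hG]
    simp
  set M := LinearMap.toMatrix' (fderiv ℝ G x : (Fin 3 → ℝ) →ₗ[ℝ] Fin 3 → ℝ)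
  have hM (v : Fin 3 → ℝ) : fderiv ℝ G x v = M *ᵥ v := by simp [M]
  simp only [dotProduct_grad, div3, hrot, hcc, hM]
  simp [cross_apply, dotProduct, mulVec, Fin.sum_univ_three]
  ring

theorem ContDiff.grad {f : (Fin 3 → ℝ) → ℝ} {n : WithTop ℕ∞} (hf : ContDiff ℝ (n + 1) f) :
    ContDiff ℝ n (grad f) :=
  contDiff_pi.2 fun i => (hf.fderiv_right le_rfl).clm_apply (contDiff_const (c := Pi.single i 1))

theorem grad_exp_const_mul {h : (Fin 3 → ℝ) → ℝ} {x : Fin 3 → ℝ} (hh : DifferentiableAt ℝ h x)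
    (c : ℝ) : grad (fun y => Real.exp (c * h y)) x = (c * Real.exp (c * h x)) • grad h x := by
  ext i
  simp [grad, fderiv_exp (hh.const_mul c), fderiv_const_mul hh]
  ring

theorem div3_const_smul (c : ℝ) (F : (Fin 3 → ℝ) → Fin 3 → ℝ) (x : Fin 3 → ℝ) :
    div3 (fun y => c • F y) x = c * div3 F x := by
  change div3 (c • F) x = _
  simp [div3, fderiv_const_smul_field, Finset.mul_sum]

theorem gibbs_density_stationary_fokker_planck_general
    (h : (Fin 3 → ℝ) → ℝ) (hh : ContDiff ℝ 2 h) (ϑ σ : ℝ) (hσ : 0 < σ)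
    (p : (Fin 3 → ℝ) → ℝ)
    (hp : ∀ x, p x = Real.exp (-(2 * ϑ / σ ^ 2) * h x)) (P : Fin 3 → ℝ) :
    -((P ⨯₃ grad h P) ⬝ᵥ grad p P)
        - ϑ * div3 (fun x => p x • (x ⨯₃ (x ⨯₃ grad h x))) P
        + σ ^ 2 / 2 * ∑ i, (P ⨯₃ (Pi.single i 1 : Fin 3 → ℝ))
            ⬝ᵥ grad (fun x => (x ⨯₃ (Pi.single i 1 : Fin 3 → ℝ)) ⬝ᵥ grad p x) P
      = 0 := by
  set c := -(2 * ϑ / σ ^ 2)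
  have hp' : p = fun x => Real.exp (c * h x) := funext hp
  have hhd : Differentiable ℝ h := hh.differentiable two_ne_zero
  have hpd : Differentiable ℝ p := hp' ▸ (hhd.const_mul c).exp
  have hgrad_p : grad p = fun x => (c * p x) • grad h x := by
    funext x; rw [hp']; exact grad_exp_const_mul (hhd x) c
  have hdrift : (P ⨯₃ grad h P) ⬝ᵥ grad p P = 0 := by
    rw [hgrad_p, dotProduct_smul, dotProduct_comm, dot_cross_self, smul_zero]
  have hnoise : ∑ i, (P ⨯₃ (Pi.single i 1 : Fin 3 → ℝ))
      ⬝ᵥ grad (fun x => (x ⨯₃ (Pi.single i 1 : Fin 3 → ℝ)) ⬝ᵥ grad p x) P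
      = -(c * div3 (fun x => p x • (x ⨯₃ (x ⨯₃ grad h x))) P) := by
    have hGp : DifferentiableAt ℝ (grad p) P := by
      rw [hgrad_p]
      exact ((hpd P).const_mul c).smul ((hh.grad (n := 1)).differentiable one_ne_zero P)
    rw [sum_cross_single_dotProduct_grad _ P hGp, ← div3_const_smul]
    simp [hgrad_p, mul_smul]
  have hbalance : σ ^ 2 / 2 * c = -ϑ := by
    simp only [c]
    field_simp
  rw [hdrift, hnoise]
  linear_combination (-div3 (fun x => p x • (x ⨯₃ (x ⨯₃ grad h x))) P) * hbalance

/-- For `h̃ : ℝ³ → ℝ` twice continuously differentiable and `ϑ, σ > 0`, the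
Gibbs density `p(Π) = exp(−(2ϑ/σ²) h̃(Π))` satisfies the stationary Fokker–Planck equation of
the dissipative stochastic rigid body:
`−(Π × ∇h̃) · ∇p − ϑ div(p (Π × (Π × ∇h̃))) + (σ²/2) Σᵢ (Π × eᵢ) · ∇((· × eᵢ) · ∇p) = 0`. -/
theorem gibbs_density_stationary_fokker_planck
    (h : (Fin 3 → ℝ) → ℝ) (hh : ContDiff ℝ 2 h) (ϑ σ : ℝ) (hϑ : 0 < ϑ) (hσ : 0 < σ)
    (p : (Fin 3 → ℝ) → ℝ)
    (hp : ∀ x, p x = Real.exp (-(2 * ϑ / σ ^ 2) * h x)) (P : Fin 3 → ℝ) :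
    -((P ⨯₃ grad h P) ⬝ᵥ grad p P)
        - ϑ * div3 (fun x => p x • (x ⨯₃ (x ⨯₃ grad h x))) P
        + σ ^ 2 / 2 * ∑ i, (P ⨯₃ (Pi.single i 1 : Fin 3 → ℝ))
            ⬝ᵥ grad (fun x => (x ⨯₃ (Pi.single i 1 : Fin 3 → ℝ)) ⬝ᵥ grad p x) P
      = 0 :=
  gibbs_density_stationary_fokker_planck_general h hh ϑ σ hσ p hp P
end

section
/- Let f : ℝ³ → ℝ be continuously differentiable and suppose Π × ∇f(Π) = 0 for every Π ∈ ℝ³. Then f is constant on every sphere centred at the origin: for all x, y ∈ ℝ³ with ‖x‖ = ‖y‖, f(x) = f(y). -/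
/-!
Since `Π × ∇f(Π) = 0`, Lagrange's identity shows that `∇f(Π)` is orthogonal to every vector
orthogonal to `Π ≠ 0`, so `f` is constant along any curve on a sphere. The circles
`p + cos t • a + sin t • b`, with `p, a, b` pairwise orthogonal and `‖a‖ = ‖b‖`, are such curves;
a rotation in the `(e₀, e₁)`-plane followed by one in the `(e₀, e₂)`-plane moves any `x` along
them to `(‖x‖, 0, 0)`.
-/

open Matrix

section Circles

variable {ι : Type*} [Fintype ι] {f : (ι → ℝ) → ℝ}

theorem apply_add_cos_smul_add_sin_smul_eq (hf : Differentiable ℝ f)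
    (htan : ∀ x v, x ≠ 0 → x ⬝ᵥ v = 0 → fderiv ℝ f x v = 0)
    {p a b : ι → ℝ} (hpa : p ⬝ᵥ a = 0) (hpb : p ⬝ᵥ b = 0) (hab : a ⬝ᵥ b = 0)
    (hnorm : a ⬝ᵥ a = b ⬝ᵥ b) (t : ℝ) :
    f (p + Real.cos t • a + Real.sin t • b) = f (p + a) := by
  set c : ℝ → ι → ℝ := fun s => p + Real.cos s • a + Real.sin s • b
  set c' : ℝ → ι → ℝ := fun s => -Real.sin s • a + Real.cos s • b
  have hc : ∀ s, HasDerivAt c (c' s) s := fun s => by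
    have hcos : HasDerivAt (fun s => Real.cos s • a) (-Real.sin s • a) s :=
      (Real.hasDerivAt_cos s).smul_const a
    have hsin : HasDerivAt (fun s => Real.sin s • b) (Real.cos s • b) s :=
      (Real.hasDerivAt_sin s).smul_const b
    have h := ((hasDerivAt_const s p).add hcos).add hsin
    rw [zero_add] at h
    exact h
  have hself : ∀ w : ι → ℝ, 0 ≤ w ⬝ᵥ w := fun w => by
    simpa using dotProduct_star_self_nonneg w
  have hap : a ⬝ᵥ p = 0 := by rw [dotProduct_comm, hpa]
  have hbp : b ⬝ᵥ p = 0 := by rw [dotProduct_comm, hpb]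
  have hba : b ⬝ᵥ a = 0 := by rw [dotProduct_comm, hab]
  have htangent : ∀ s, c s ⬝ᵥ c' s = 0 := fun s => by
    simp only [c, c', add_dotProduct, dotProduct_add, smul_dotProduct, dotProduct_smul,
      hpa, hpb, hab, hba, hnorm, smul_eq_mul]
    ring
  have hspeed : ∀ s, c' s ⬝ᵥ c' s ≤ c s ⬝ᵥ c s := fun s => by
    have hp := hself p
    have hpyth := Real.sin_sq_add_cos_sq s
    simp only [c, c', add_dotProduct, dotProduct_add, smul_dotProduct, dotProduct_smul,
      hpa, hpb, hab, hba, hap, hbp, hnorm, smul_eq_mul]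
    nlinarith
  have hconst : ∀ s, HasDerivAt (f ∘ c) 0 s := fun s => by
    have h := (hf (c s)).hasFDerivAt.comp_hasDerivAt s (hc s)
    by_cases h0 : c s = 0
    · -- the tangency hypothesis says nothing at the origin, but there the curve is at rest
      have hrest : c' s = 0 := by
        rw [← dotProduct_self_eq_zero]
        refine le_antisymm ((hspeed s).trans_eq ?_) (hself _)
        rw [h0, dotProduct_zero]
      rwa [hrest, map_zero] at h
    · rwa [htan _ _ h0 (htangent s)] at h
  simpa [c] using is_const_of_deriv_eq_zero (fun s => (hconst s).differentiableAt)
    (fun s => (hconst s).deriv) t 0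

theorem apply_add_smul_add_smul_eq (hf : Differentiable ℝ f)
    (htan : ∀ x v, x ≠ 0 → x ⬝ᵥ v = 0 → fderiv ℝ f x v = 0)
    {p u v : ι → ℝ} (hpu : p ⬝ᵥ u = 0) (hpv : p ⬝ᵥ v = 0) (huv : u ⬝ᵥ v = 0)
    (hnorm : u ⬝ᵥ u = v ⬝ᵥ v) (α β : ℝ) :
    f (p + α • u + β • v) = f (p + √(α ^ 2 + β ^ 2) • u) := by
  set z : ℂ := ⟨α, β⟩
  have hr : √(α ^ 2 + β ^ 2) = ‖z‖ := (Complex.norm_eq_sqrt_sq_add_sq z).symm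
  have h := apply_add_cos_smul_add_sin_smul_eq hf htan (p := p) (a := ‖z‖ • u) (b := ‖z‖ • v)
    (by simp [hpu]) (by simp [hpv]) (by simp [huv]) (by simp [hnorm]) (Complex.arg z)
  rwa [smul_smul, smul_smul, mul_comm, Complex.norm_mul_cos_arg, mul_comm,
    Complex.norm_mul_sin_arg, ← hr] at h

end Circles

theorem fderiv_apply_eq_zero_of_cross_grad_eq_zero {f : (Fin 3 → ℝ) → ℝ} {x v : Fin 3 → ℝ}
    (hcas : x ⨯₃ grad f x = 0) (hx : x ≠ 0) (hxv : x ⬝ᵥ v = 0) : fderiv ℝ f x v = 0 := by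
  have h := cross_dot_cross x (grad f x) x v
  rw [hcas, hxv, zero_dotProduct, zero_mul, sub_zero, eq_comm] at h
  rw [fderiv_apply_eq_dotProduct_grad, dotProduct_comm]
  exact (mul_eq_zero.mp h).resolve_left (dotProduct_self_eq_zero.not.mpr hx)

theorem apply_eq_apply_sqrt_smul_single {f : (Fin 3 → ℝ) → ℝ} (hf : Differentiable ℝ f)
    (htan : ∀ x v, x ≠ 0 → x ⬝ᵥ v = 0 → fderiv ℝ f x v = 0) (x : Fin 3 → ℝ) :
    f x = f (√(∑ i, x i ^ 2) • Pi.single 0 1) := by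
  set e : Fin 3 → Fin 3 → ℝ := fun i => Pi.single i 1
  have hx : x = x 2 • e 2 + x 0 • e 0 + x 1 • e 1 := by
    ext i; fin_cases i <;> simp [e]
  have hsq : √(√(x 0 ^ 2 + x 1 ^ 2) ^ 2 + x 2 ^ 2) = √(∑ i, x i ^ 2) := by
    rw [Real.sq_sqrt (by positivity), Fin.sum_univ_three]
  calc f x = f (x 2 • e 2 + √(x 0 ^ 2 + x 1 ^ 2) • e 0) := by
        nth_rw 1 [hx]
        exact apply_add_smul_add_smul_eq hf htan (by simp [e]) (by simp [e]) (by simp [e])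
          (by simp [e]) _ _
    _ = f (0 + √(x 0 ^ 2 + x 1 ^ 2) • e 0 + x 2 • e 2) := by rw [zero_add, add_comm]
    _ = f (√(∑ i, x i ^ 2) • e 0) := by
        rw [apply_add_smul_add_smul_eq hf htan (by simp [e]) (by simp [e]) (by simp [e])
          (by simp [e]), hsq, zero_add]

/-- If `f : ℝ³ → ℝ` is continuously differentiable and `Π × ∇f(Π) = 0` for
every `Π` (i.e. `f` is a Casimir of the rigid-body Lie–Poisson bracket), then `f` is constant on
every sphere centred at the origin: `‖x‖ = ‖y‖` (Euclidean norm) implies `f x = f y`. -/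
theorem casimir_constant_on_spheres
    (f : (Fin 3 → ℝ) → ℝ) (hf : ContDiff ℝ 1 f)
    (hcas : ∀ P : Fin 3 → ℝ, P ⨯₃ grad f P = 0) :
    ∀ x y : Fin 3 → ℝ,
      Real.sqrt (∑ i, x i ^ 2) = Real.sqrt (∑ i, y i ^ 2) → f x = f y := by
  have hdiff : Differentiable ℝ f := hf.differentiable one_ne_zero
  have htan : ∀ x v, x ≠ 0 → x ⬝ᵥ v = 0 → fderiv ℝ f x v = 0 := fun x _ hx hxv =>
    fderiv_apply_eq_zero_of_cross_grad_eq_zero (hcas x) hx hxv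
  intro x y hxy
  rw [apply_eq_apply_sqrt_smul_single hdiff htan x, apply_eq_apply_sqrt_smul_single hdiff htan y,
    hxy]
end

section
/- Let v = (α, β, γ) ∈ ℝ³, let Λ be the 3 × 3 real antisymmetric matrix with Λx = v × x for all x ∈ ℝ³, let k > 0, and set A = kI₃ + Λ. Then the integral ∫_0^∞ exp(−ρA) exp(−ρAᵀ) dρ converges and equals (1/(2k)) I₃. -/
/-!
Since `Λ` is skew, `Aᵀ = k • 1 - Λ` commutes with `A = k • 1 + Λ` and `A + Aᵀ = 2k • 1`. Hence
`exp (-ρA) exp (-ρAᵀ) = exp (-ρ (A + Aᵀ)) = e^{-2kρ} • 1`, and the integral reduces to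
`∫_0^∞ e^{-2kρ} dρ = 1 / (2k)`.
-/

open Matrix MeasureTheory

namespace Matrix

variable {n : Type*} [Fintype n] [DecidableEq n]

theorem exp_smul_one (c : ℝ) :
    NormedSpace.exp (c • (1 : Matrix n n ℝ)) = Real.exp c • (1 : Matrix n n ℝ) := by
  rw [smul_one_eq_diagonal, exp_diagonal, smul_one_eq_diagonal, Pi.exp_def, Real.exp_eq_exp_ℝ]

theorem exp_neg_smul_mul_exp_neg_smul_transpose_of_transpose_eq_neg {Λ : Matrix n n ℝ}
    (hΛ : Λᵀ = -Λ) (k ρ : ℝ) :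
    NormedSpace.exp (-(ρ • (k • 1 + Λ))) * NormedSpace.exp (-(ρ • (k • 1 + Λ)ᵀ)) =
      Real.exp (-(2 * k) * ρ) • (1 : Matrix n n ℝ) := by
  have htranspose : (k • 1 + Λ)ᵀ = k • 1 - Λ := by
    rw [transpose_add, transpose_smul, transpose_one, hΛ, sub_eq_add_neg]
  have hcomm : Commute (k • 1 + Λ) (k • 1 - Λ) :=
    ((Commute.one_right _).smul_right k).sub_right
      (((Commute.one_left Λ).smul_left k).add_left (Commute.refl Λ))
  rw [htranspose, ← exp_add_of_commute _ _ ((hcomm.smul_left ρ).smul_right ρ).neg_left.neg_right,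
    ← exp_smul_one]
  congr 1
  module

end Matrix

theorem coloured_noise_covariance_general (k : ℝ) (hk : 0 < k)
    (Λ : Matrix (Fin 3) (Fin 3) ℝ) (hΛasymm : Λᵀ = -Λ)
    (A : Matrix (Fin 3) (Fin 3) ℝ) (hA : A = k • (1 : Matrix (Fin 3) (Fin 3) ℝ) + Λ) :
    (∀ i j, IntegrableOn (fun ρ : ℝ =>
        (NormedSpace.exp (-(ρ • A)) * NormedSpace.exp (-(ρ • Aᵀ))) i j) (Set.Ici 0)) ∧
      (Matrix.of fun i j => ∫ ρ in Set.Ici (0 : ℝ),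
          (NormedSpace.exp (-(ρ • A)) * NormedSpace.exp (-(ρ • Aᵀ))) i j)
        = (1 / (2 * k)) • (1 : Matrix (Fin 3) (Fin 3) ℝ) := by
  subst hA
  have hdecay : IntegrableOn (fun ρ : ℝ => Real.exp (-(2 * k) * ρ)) (Set.Ici 0) := by
    rw [integrableOn_Ici_iff_integrableOn_Ioi]
    exact integrableOn_exp_mul_Ioi (by linarith) 0
  simp_rw [exp_neg_smul_mul_exp_neg_smul_transpose_of_transpose_eq_neg hΛasymm, Matrix.smul_apply,
    smul_eq_mul]
  refine ⟨fun i j => hdecay.mul_const _, ?_⟩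
  ext i j
  rw [of_apply, integral_mul_const, integral_Ici_eq_integral_Ioi,
    integral_exp_mul_Ioi (by linarith), Matrix.smul_apply, smul_eq_mul]
  simp only [mul_zero, Real.exp_zero]
  field_simp

/-- Let `v = (α, β, γ) ∈ ℝ³`, let `Λ` be the `3 × 3` real antisymmetric
matrix with `Λx = v × x` for all `x`, let `k > 0`, and set `A = k I₃ + Λ`.  Then the integral
`∫_0^∞ exp(−ρA) exp(−ρAᵀ) dρ` converges (entrywise) and equals `(1/(2k)) I₃`. -/
theorem coloured_noise_covariance (α β γ k : ℝ) (hk : 0 < k)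
    (Λ : Matrix (Fin 3) (Fin 3) ℝ) (hΛasymm : Λᵀ = -Λ)
    (hΛ : ∀ x : Fin 3 → ℝ, Λ *ᵥ x = (![α, β, γ] : Fin 3 → ℝ) ⨯₃ x)
    (A : Matrix (Fin 3) (Fin 3) ℝ) (hA : A = k • (1 : Matrix (Fin 3) (Fin 3) ℝ) + Λ) :
    (∀ i j, IntegrableOn (fun ρ : ℝ =>
        (NormedSpace.exp (-(ρ • A)) * NormedSpace.exp (-(ρ • Aᵀ))) i j) (Set.Ici 0)) ∧
      (Matrix.of fun i j => ∫ ρ in Set.Ici (0 : ℝ),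
          (NormedSpace.exp (-(ρ • A)) * NormedSpace.exp (-(ρ • Aᵀ))) i j)
        = (1 / (2 * k)) • (1 : Matrix (Fin 3) (Fin 3) ℝ) :=
  coloured_noise_covariance_general k hk Λ hΛasymm A hA
end

section
/- Let v = (α, β, γ) ∈ ℝ³, let Λ be the 3 × 3 real antisymmetric matrix with Λx = v × x for all x ∈ ℝ³, let k > 0, and set A = kI₃ + Λ and Σ = (1/(2k)) I₃. Then A is invertible and Σ (A⁻¹)ᵀ − A⁻¹ Σ = (1/(k (α² + β² + γ² + k²))) Λ. -/
open Matrix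

/-!
Writing `Λ` for the cross-product matrix of `v`, the identity
`Λ (Λ x) = v ⨯ (v ⨯ x) = (v ⬝ x) v - |v|² x` shows that `M = k² I + v vᵀ - k Λ` satisfies
`(k I + Λ) M = k (k² + |v|²) I`, so `A⁻¹` is a multiple of `M`. Since `Σ` is scalar,
`Σ (A⁻¹)ᵀ - A⁻¹ Σ` only sees the antisymmetric part `Mᵀ - M = 2 k Λ`.
-/

namespace Matrix

variable {R : Type*} [CommRing R]

theorem smul_one_mul_transpose_sub_mul_smul_one {n : Type*} [Fintype n] [DecidableEq n]
    (s : R) (B : Matrix n n R) : (s • 1) * Bᵀ - B * (s • 1) = s • (Bᵀ - B) := by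
  rw [smul_one_mul, mul_smul_one, smul_sub]

section CrossProductMatrix

variable {Λ : Matrix (Fin 3) (Fin 3) R} {v : Fin 3 → R}

/-- The adjugate of `k • 1 + Λ` when `Λ` is the cross-product matrix of `v`. -/
def crossAdjugate (k : R) (v : Fin 3 → R) (Λ : Matrix (Fin 3) (Fin 3) R) :
    Matrix (Fin 3) (Fin 3) R :=
  k ^ 2 • 1 + vecMulVec v v - k • Λ

theorem smul_one_add_mul_crossAdjugate (hΛ : ∀ x, Λ *ᵥ x = v ⨯₃ x) (k : R) :
    (k • 1 + Λ) * crossAdjugate k v Λ = (k * (k ^ 2 + v ⬝ᵥ v)) • 1 := by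
  refine ext_iff_mulVec.mpr fun x ↦ ?_
  simp only [crossAdjugate, ← mulVec_mulVec, add_mulVec, sub_mulVec, smul_mulVec, one_mulVec,
    mulVec_add, mulVec_sub, mulVec_smul, vecMulVec_mulVec, op_smul_eq_smul, hΛ, cross_self,
    cross_cross_eq_smul_sub_smul']
  module

theorem crossAdjugate_transpose_sub (hΛ : Λᵀ = -Λ) (k : R) :
    (crossAdjugate k v Λ)ᵀ - crossAdjugate k v Λ = (2 * k) • Λ := by
  simp only [crossAdjugate, transpose_sub, transpose_add, transpose_smul, transpose_one,
    transpose_vecMulVec, hΛ]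
  module

end CrossProductMatrix

end Matrix

/-- Let `v = (α, β, γ) ∈ ℝ³`, let `Λ` be the `3 × 3` real antisymmetric
matrix with `Λx = v × x` for all `x`, let `k > 0`, and set `A = k I₃ + Λ` and
`Σ = (1/(2k)) I₃`.  Then `A` is invertible and
`Σ(A⁻¹)ᵀ − A⁻¹Σ = (1/(k(α² + β² + γ² + k²))) Λ`. -/
theorem coloured_noise_levy_area (α β γ k : ℝ) (hk : 0 < k)
    (Λ : Matrix (Fin 3) (Fin 3) ℝ) (hΛasymm : Λᵀ = -Λ)
    (hΛ : ∀ x : Fin 3 → ℝ, Λ *ᵥ x = (![α, β, γ] : Fin 3 → ℝ) ⨯₃ x)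
    (A S : Matrix (Fin 3) (Fin 3) ℝ)
    (hA : A = k • (1 : Matrix (Fin 3) (Fin 3) ℝ) + Λ)
    (hS : S = (1 / (2 * k)) • (1 : Matrix (Fin 3) (Fin 3) ℝ)) :
    IsUnit A ∧
      S * (A⁻¹)ᵀ - A⁻¹ * S = (1 / (k * (α ^ 2 + β ^ 2 + γ ^ 2 + k ^ 2))) • Λ := by
  subst hA hS
  set v : Fin 3 → ℝ := ![α, β, γ]
  have hv : v ⬝ᵥ v = α ^ 2 + β ^ 2 + γ ^ 2 := by
    simp [v]
    ring
  have hdet : k * (k ^ 2 + v ⬝ᵥ v) ≠ 0 := by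
    rw [hv]
    positivity
  have hright :
      (k • 1 + Λ) * ((k * (k ^ 2 + v ⬝ᵥ v))⁻¹ • crossAdjugate k v Λ) = 1 := by
    rw [Matrix.mul_smul, smul_one_add_mul_crossAdjugate hΛ, smul_smul, inv_mul_cancel₀ hdet,
      one_smul]
  refine ⟨.of_mul_eq_one _ hright, ?_⟩
  rw [inv_eq_right_inv hright, smul_one_mul_transpose_sub_mul_smul_one, transpose_smul,
    ← smul_sub, crossAdjugate_transpose_sub hΛasymm, smul_smul, smul_smul, hv]
  congr 1
  field_simp
  ring
end
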